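/- The set of Martin-Löf random sequences has measure 1 under the uniform measure on the Cantor space ℕ → Bool; equivalently, the union of all effectively null sets is a null set for the uniform measure. -/

import Mathlib

open Filter MeasureTheory Set
open scoped ENNReal

/-- The first `n` bits of `ω`, i.e. the list `[ω 0, …, ω (n-1)]`. -/
def prefixFn (ω : ℕ → Bool) (n : ℕ) : List Bool := List.ofFn fun i : Fin n => ω i

/-- `α` has limit frequency `p`: the fraction of `true`s among the first `N` terms
tends to `p` as `N → ∞`. -/
def LimitFreq (α : ℕ → Bool) (p : ℝ) : Prop :=
  Tendsto (fun N => (((Finset.range N).filter fun i => α i = true).card : ℝ) / N)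
    atTop (nhds p)

/-- The set of indices `i` such that the selection rule `s` selects the term `ω i`. -/
def SelectedIndices (s : List Bool → Bool) (ω : ℕ → Bool) : Set ℕ :=
  {i | s (prefixFn ω i) = true}

/-- The subsequence selected by `s` from `ω`: the selected terms, in increasing order of
index (meaningful when the selected index set is infinite). -/
noncomputable def SelectedSeq (s : List Bool → Bool) (ω : ℕ → Bool) : ℕ → Bool :=
  fun n => ω (Nat.nth (· ∈ SelectedIndices s ω) n)

/-- Requirement II for the selection rule `s` with limit `p`: the subsequence selected by
`s` is finite or has limit frequency `p`. -/
def SatisfiesII (s : List Bool → Bool) (ω : ℕ → Bool) (p : ℝ) : Prop :=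
  (SelectedIndices s ω).Finite ∨ LimitFreq (SelectedSeq s ω) p

/-- A (non-negative) martingale. -/
def IsMartingale (m : List Bool → ℝ) : Prop :=
  (∀ x, 0 ≤ m x) ∧ ∀ x, m x = (m (x ++ [false]) + m (x ++ [true])) / 2

/-- A (non-negative) supermartingale. -/
def IsSupermartingale (m : List Bool → ℝ) : Prop :=
  (∀ x, 0 ≤ m x) ∧ ∀ x, (m (x ++ [false]) + m (x ++ [true])) / 2 ≤ m x

/-- `m` wins against `ω`: the values of `m` on the prefixes of `ω` are unbounded. -/
def Wins (m : List Bool → ℝ) (ω : ℕ → Bool) : Prop :=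
  ∀ C : ℝ, ∃ n, C < m (prefixFn ω n)

/-- The cylinder of all infinite sequences extending the finite string `w`. -/
def cyl (w : List Bool) : Set (ℕ → Bool) := {ω | prefixFn ω w.length = w}

/-- `μ` is the uniform (fair-coin) measure on Cantor space, i.e. the infinite product
over `ℕ` of the uniform measure on `Bool`; it is characterized by its values on
cylinders: `μ (cyl w) = 2 ^ (- length w)`. -/
def IsUniformMeasure (μ : Measure (ℕ → Bool)) : Prop :=
  ∀ w : List Bool, μ (cyl w) = ((2 : ℝ≥0∞) ^ w.length)⁻¹

/-- `X` is an effectively null set: some computable `g` produces, for every `k`, a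
sequence of (optional) strings whose cylinders cover `X` and whose total measure is at
most `2^(-k)`. -/
def EffNull (X : Set (ℕ → Bool)) : Prop :=
  ∃ g : ℕ → ℕ → Option (List Bool), Computable₂ g ∧
    ∀ k : ℕ,
      (X ⊆ ⋃ n : ℕ, ⋃ w ∈ g k n, cyl w) ∧
      (∑' n : ℕ, ((g k n).elim 0 fun w => ((2 : ℝ≥0∞) ^ w.length)⁻¹)) ≤
        ((2 : ℝ≥0∞) ^ k)⁻¹

/-- `ω` is Martin-Löf random: it belongs to no effectively null set. -/
def MLRandom (ω : ℕ → Bool) : Prop := ∀ X : Set (ℕ → Bool), EffNull X → ω ∉ X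

/-- A canonical `Primcodable` structure on `ℚ`, via its canonical enumeration. -/
instance : Primcodable ℚ := Primcodable.ofEquiv ℕ (Denumerable.eqv ℚ)

/-- `f` is lower semicomputable: it is the pointwise supremum of a computable family of
rationals, nondecreasing in the second argument. -/
def LowerSemicomputableFn (f : List Bool → ℝ) : Prop :=
  ∃ g : List Bool → ℕ → ℚ, Computable₂ g ∧ (∀ x, Monotone fun n => g x n) ∧
    ∀ x, f x = ⨆ n, ((g x n : ℝ))

/-- `f` is computable: some computable family of rationals approximates it within
`2^(-n)`. -/
def ComputableFn (f : List Bool → ℝ) : Prop :=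
  ∃ g : List Bool → ℕ → ℚ, Computable₂ g ∧
    ∀ x n, |((g x n : ℝ)) - f x| ≤ (2 : ℝ) ^ (-(n : ℤ))

/-! A non-random sequence lies in the null set `⋂ k, U_k` of some Martin-Löf test `(U_k)`, and
that set has measure at most `2^(-k)` for every `k`, hence measure zero. Every test is given by
a computable function, of which there are only countably many, so the non-random sequences
form a countable union of null sets. -/

-- A computable function is determined by the partial recursive function it induces on codes.
open Encodable in
theorem Computable.countable_setOf {α β : Type*} [Primcodable α] [Primcodable β] :
    {f : α → β | Computable f}.Countable := by
  let code : {f : α → β // Computable f} → {f : ℕ →. ℕ // Partrec f} := fun f =>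
    ⟨fun n => (decode (α := α) n : Part α).bind fun a => ((f.1 : α →. β) a).map encode,
      Partrec.nat_iff.2 f.2⟩
  have : Function.Injective code := by
    intro f g h
    ext1; funext a
    have := congrFun (congrArg Subtype.val h) (encode a)
    simpa [code] using this
  exact Set.countable_coe_iff.1 this.countable

theorem Computable₂.countable_setOf {α β σ : Type*} [Primcodable α] [Primcodable β]
    [Primcodable σ] : {f : α → β → σ | Computable₂ f}.Countable :=
  Computable.countable_setOf.preimage Function.uncurry_injective

theorem ENNReal.eq_zero_of_forall_le_inv_two_pow {a : ℝ≥0∞} (h : ∀ k : ℕ, a ≤ (2 ^ k)⁻¹) :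
    a = 0 := by
  by_contra ha
  obtain ⟨k, hk⟩ := ENNReal.exists_inv_two_pow_lt ha
  exact (h k).not_gt (by rwa [← ENNReal.inv_pow] at hk)

/-- The uniform measure of the cylinder of `w` when `o = some w`, and `0` when `o = none`. -/
noncomputable def cylMass (o : Option (List Bool)) : ℝ≥0∞ :=
  o.elim 0 fun w => ((2 : ℝ≥0∞) ^ w.length)⁻¹

def testNullSet (g : ℕ → ℕ → Option (List Bool)) : Set (ℕ → Bool) :=
  ⋂ k, ⋃ n, ⋃ w ∈ g k n, cyl w

section UniformMeasure

variable {μ : Measure (ℕ → Bool)}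

theorem IsUniformMeasure.isProbabilityMeasure (hμ : IsUniformMeasure μ) :
    IsProbabilityMeasure μ := by
  refine ⟨?_⟩
  have : cyl [] = univ := by ext ω; simp [cyl, prefixFn]
  simpa [this] using hμ []

theorem IsUniformMeasure.measure_biUnion_cyl (hμ : IsUniformMeasure μ)
    (o : Option (List Bool)) :
    μ (⋃ w ∈ o, cyl w) = cylMass o := by
  cases o <;> simp [cylMass, hμ _]

theorem IsUniformMeasure.measure_iUnion_cyl_le (hμ : IsUniformMeasure μ)
    (c : ℕ → Option (List Bool)) :
    μ (⋃ n, ⋃ w ∈ c n, cyl w) ≤ ∑' n, cylMass (c n) :=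
  (measure_iUnion_le _).trans_eq (by simp only [hμ.measure_biUnion_cyl])

theorem IsUniformMeasure.measure_testNullSet (hμ : IsUniformMeasure μ)
    {g : ℕ → ℕ → Option (List Bool)}
    (hg : ∀ k, ∑' n, cylMass (g k n) ≤ ((2 : ℝ≥0∞) ^ k)⁻¹) : μ (testNullSet g) = 0 :=
  ENNReal.eq_zero_of_forall_le_inv_two_pow fun k =>
    (measure_mono (iInter_subset _ k)).trans ((hμ.measure_iUnion_cyl_le _).trans (hg k))

end UniformMeasure

theorem setOf_not_mlRandom_eq : {ω | ¬ MLRandom ω} =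
    ⋃ g ∈ {g | Computable₂ g ∧ ∀ k, ∑' n, cylMass (g k n) ≤ ((2 : ℝ≥0∞) ^ k)⁻¹},
      testNullSet g := by
  ext ω
  simp only [mem_ofPred_eq, MLRandom, not_forall, not_not, mem_iUnion, exists_prop]
  constructor
  · rintro ⟨X, ⟨g, hg, hcover⟩, hω⟩
    exact ⟨g, ⟨hg, fun k => (hcover k).2⟩, mem_iInter.2 fun k => (hcover k).1 hω⟩
  · rintro ⟨g, ⟨hg, hmass⟩, hω⟩
    exact ⟨testNullSet g, ⟨g, hg, fun k => ⟨iInter_subset _ k, hmass k⟩⟩, hω⟩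

/-- The set of Martin-Löf random sequences has uniform measure `1`; equivalently, the
union of all effectively null sets (the set of non-random sequences) is a null set. -/
theorem mlrandom_measure_one (μ : Measure (ℕ → Bool)) (hμ : IsUniformMeasure μ) :
    μ {ω : ℕ → Bool | MLRandom ω} = 1 ∧ μ {ω : ℕ → Bool | ¬ MLRandom ω} = 0 := by
  have := hμ.isProbabilityMeasure
  have hnull : μ {ω | ¬ MLRandom ω} = 0 := by
    rw [setOf_not_mlRandom_eq,
      measure_biUnion_null_iff (Computable₂.countable_setOf.mono fun _ hg => hg.1)]
    exact fun g hg => hμ.measure_testNullSet hg.2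
  refine ⟨?_, hnull⟩
  rw [measure_congr ((ae_eq_univ (s := {ω | MLRandom ω})).2 hnull), measure_univ]
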